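/- Let t ∈ {1, …, r} and let a be an integer with 0 ≤ a < i_{t−1} − i_t. Then the Wunram expansion (d_1, …, d_r) of a satisfies: d_k = 0 for every k < t; d_t ≤ b_t − 2; and whenever d_k = b_k − 1 for some k > t, there exists l with t ≤ l < k and d_l ≤ b_l − 3. -/

import Mathlib

/-!
Write `S m = ∑_{k=m}^{r} d_k i_k` for the tails of the expansion, so that `a = S 1` and
`S m = d_m i_m + S (m + 1)`. Since all terms are non-negative, `d_k i_k ≤ a < i_{t-1} ≤ i_k` for
`k < t`, which kills the first digits and gives `a = S t`. The other two claims follow from one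
downward induction: if `d_k ≥ b_k - 1` and `d_l ≥ b_l - 2` for `m ≤ l < k`, then
`S m ≥ i_{m-1} - i_m`, because the recursion `i_{l-1} = b_l i_l - i_{l+1}` turns
`(b_l - 2) i_l + (i_l - i_{l+1})` into `i_{l-1} - i_l`. Applied with `m = t` this contradicts
`S t = a < i_{t-1} - i_t`.
-/

open Finset

namespace Wunram

variable {r : ℕ} {i b d : ℕ → ℤ}

def tailSum (r : ℕ) (d i : ℕ → ℤ) (m : ℕ) : ℤ := ∑ k ∈ Icc m r, d k * i k

lemma tailSum_eq_add_tailSum_succ {m : ℕ} (hm : m ≤ r) :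
    tailSum r d i m = d m * i m + tailSum r d i (m + 1) := by
  rw [tailSum, tailSum, Icc_add_one_left_eq_Ioc, ← Icc_erase_left]
  exact (add_sum_erase _ (fun k => d k * i k) (mem_Icc.2 ⟨le_rfl, hm⟩)).symm

lemma tailSum_eq_of_eq_zero {m n : ℕ} (hd : ∀ k, m ≤ k → k < n → d k = 0) (hmn : m ≤ n)
    (hn : n ≤ r + 1) : tailSum r d i m = tailSum r d i n := by
  induction n, hmn using Nat.le_induction with
  | base => rfl
  | succ n hmn ih =>
    rw [ih (fun k h1 h2 => hd k h1 (by omega)) (by omega),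
      tailSum_eq_add_tailSum_succ (by omega), hd n hmn (by omega), zero_mul, zero_add]

lemma antitoneOn_Icc_of_lt (hlt : ∀ m, 1 ≤ m → m ≤ r → i (m + 1) < i m) :
    AntitoneOn i (Set.Icc 1 (r + 1)) :=
  antitoneOn_of_succ_le Set.ordConnected_Icc fun m _ hm hm' => by
    rw [Order.succ_eq_add_one] at hm' ⊢
    exact (hlt m hm.1 (by simpa using hm'.2)).le

lemma sub_le_tailSum {m k : ℕ}
    (hrec : ∀ j, 1 ≤ j → j ≤ r → i (j - 1) = b j * i j - i (j + 1))
    (hi : ∀ j, 1 ≤ j → j ≤ r + 1 → 0 ≤ i j) (htail : 0 ≤ tailSum r d i (k + 1))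
    (hk : b k - 1 ≤ d k) (hd : ∀ l, m ≤ l → l < k → b l - 2 ≤ d l)
    (hm : 1 ≤ m) (hmk : m ≤ k) (hkr : k ≤ r) :
    i (m - 1) - i m ≤ tailSum r d i m := by
  induction hmk using Nat.decreasingInduction with
  | self =>
    have hdk : (b k - 1) * i k ≤ d k * i k :=
      mul_le_mul_of_nonneg_right hk (hi k hm (by omega))
    rw [tailSum_eq_add_tailSum_succ hkr, hrec k hm hkr]
    linarith [hi (k + 1) (by omega) (by omega)]
  | of_succ j hjk ih =>
    have hdj : (b j - 2) * i j ≤ d j * i j :=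
      mul_le_mul_of_nonneg_right (hd j le_rfl hjk) (hi j hm (by omega))
    have hsucc := ih (fun l h1 h2 => hd l (by omega) h2) (by omega)
    rw [Nat.add_sub_cancel] at hsucc
    rw [tailSum_eq_add_tailSum_succ (by omega), hrec j hm (by omega)]
    linarith

end Wunram

open Wunram

theorem stmt_12_general
    (r : ℕ)
    (i b : ℕ → ℤ)
    (hrec : ∀ t, 1 ≤ t → t ≤ r → i (t - 1) = b t * i t - i (t + 1))
    (hlt : ∀ t, 1 ≤ t → t ≤ r → 0 ≤ i (t + 1) ∧ i (t + 1) < i t)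
    (t : ℕ) (ht1 : 1 ≤ t) (htr : t ≤ r)
    (a : ℤ) (ha : a < i (t - 1) - i t)
    (dd : ℕ → ℤ)
    (hddnn : ∀ k, 1 ≤ k → k ≤ r → 0 ≤ dd k)
    (hdsum : a = ∑ k ∈ Finset.Icc 1 r, dd k * i k)
    (hdtail : ∀ t0, t0 ≤ r →
      0 ≤ ∑ k ∈ Finset.Icc (t0 + 1) r, dd k * i k ∧
      ∑ k ∈ Finset.Icc (t0 + 1) r, dd k * i k < i t0) :
    (∀ k, 1 ≤ k → k < t → dd k = 0) ∧
    dd t ≤ b t - 2 ∧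
    (∀ k, t < k → k ≤ r → dd k = b k - 1 →
      ∃ l, t ≤ l ∧ l < k ∧ dd l ≤ b l - 3) := by
  have hpos : ∀ m, 1 ≤ m → m ≤ r → 0 < i m := fun m h1 h2 =>
    (hlt m h1 h2).1.trans_lt (hlt m h1 h2).2
  have hnonneg : ∀ m, 1 ≤ m → m ≤ r + 1 → 0 ≤ i m := fun m h1 h2 => by
    rcases Nat.lt_or_ge m (r + 1) with h | h
    · exact (hpos m h1 (by omega)).le
    · obtain rfl : m = r + 1 := by omega
      exact (hlt r (by omega) le_rfl).1
  have hprefix : ∀ k, 1 ≤ k → k < t → dd k = 0 := by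
    intro k hk1 hkt
    have hterms : ∀ j ∈ Icc 1 r, 0 ≤ dd j * i j := fun j hj => by
      obtain ⟨h1, h2⟩ := mem_Icc.1 hj
      exact mul_nonneg (hddnn j h1 h2) (hpos j h1 h2).le
    have hdk : dd k * i k ≤ a := hdsum ▸ single_le_sum hterms (mem_Icc.2 ⟨hk1, by omega⟩)
    have hik : i (t - 1) ≤ i k := antitoneOn_Icc_of_lt (fun m h1 h2 => (hlt m h1 h2).2)
      ⟨hk1, by omega⟩ ⟨by omega, by omega⟩ (by omega)
    have hdk1 : dd k < 1 := lt_of_mul_lt_mul_right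
      (by linarith [hpos t ht1 htr]) (hpos k hk1 (by omega)).le
    linarith [hddnn k hk1 (by omega)]
  have hat : a = tailSum r dd i t := hdsum.trans (tailSum_eq_of_eq_zero hprefix ht1 (by omega))
  have hlow : ¬ i (t - 1) - i t ≤ tailSum r dd i t := not_le.2 (hat ▸ ha)
  refine ⟨hprefix, ?_, ?_⟩
  · by_contra! h
    exact hlow (sub_le_tailSum hrec hnonneg (hdtail t htr).1 (by omega)
      (fun l h1 h2 => by omega) ht1 le_rfl htr)
  · intro k htk hkr hdk
    by_contra! h
    exact hlow (sub_le_tailSum hrec hnonneg (hdtail k hkr).1 hdk.ge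
      (fun l h1 h2 => by linarith [h l h1 h2]) ht1 htk.le hkr)

/-- Shape of the Wunram expansion of 0 ≤ a < i_{t−1} − i_t. -/
theorem stmt_12
    (n q : ℤ) (r : ℕ)
    (hq : 0 < q) (hqn : q < n) (hcop : IsCoprime q n)
    (hr : 1 ≤ r)
    (i b : ℕ → ℤ)
    (hi0 : i 0 = n) (hi1 : i 1 = q)
    (hrec : ∀ t, 1 ≤ t → t ≤ r → i (t - 1) = b t * i t - i (t + 1))
    (hlt : ∀ t, 1 ≤ t → t ≤ r → 0 ≤ i (t + 1) ∧ i (t + 1) < i t)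
    (hir : i r = 1) (hir1 : i (r + 1) = 0)
    (t : ℕ) (ht1 : 1 ≤ t) (htr : t ≤ r)
    (a : ℤ) (ha0 : 0 ≤ a) (ha : a < i (t - 1) - i t)
    (dd : ℕ → ℤ)
    (hddnn : ∀ k, 1 ≤ k → k ≤ r → 0 ≤ dd k)
    (hdsum : a = ∑ k ∈ Finset.Icc 1 r, dd k * i k)
    (hdtail : ∀ t0, t0 ≤ r →
      0 ≤ ∑ k ∈ Finset.Icc (t0 + 1) r, dd k * i k ∧
      ∑ k ∈ Finset.Icc (t0 + 1) r, dd k * i k < i t0) :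
    (∀ k, 1 ≤ k → k < t → dd k = 0) ∧
    dd t ≤ b t - 2 ∧
    (∀ k, t < k → k ≤ r → dd k = b k - 1 →
      ∃ l, t ≤ l ∧ l < k ∧ dd l ≤ b l - 3) :=
  stmt_12_general r i b hrec hlt t ht1 htr a ha dd hddnn hdsum hdtail
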